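/- arXiv:math/0403496 — 4 statements merged into one kernel-verified Lean document; each statement's English description precedes it below -/
import Mathlib

section
/- Let (W,S) be a dihedral Coxeter system (|S| = 2), s ∈ S a simple reflection, x ∈ W, and set A = {y ∈ W : y ≤ x} (Bruhat order). Then in the Hecke algebra (T_s + 1)·∑_{y∈A} T_y = ∑_{y ∈ A ∪ sA} T_y + v^{-2}·∑_{y ∈ A ∩ sA} T_y. -/
/-!
Left multiplication by `T_s` sends `T_y` to `T_{sy}` when `sy > y`, and to
`v⁻² T_{sy} + (v⁻² - 1) T_y` when `sy < y`; hence `(T_s + 1) T_y` is `T_y + T_{sy}` or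
`v⁻² (T_y + T_{sy})`. Summing over the ascents and the descents of `A` separately, each
ascent `y` contributes the `s`-orbit `{y, sy}` of `A ∪ sA` and each descent the orbit of
`A ∩ sA`. This only needs `A` to be closed under `y ↦ sy` at descents, which for a lower
Bruhat interval in a dihedral group holds because there every element of smaller length
lies below `x`: reduced words alternate between the two generators, so a shorter one is a
subword of a longer one.
-/

/-- The Bruhat order on a Coxeter group: `u ≤ x` iff some (equivalently, every)
reduced word for `x` has a subword which is a word for `u`. -/
def CoxeterSystem.bruhatLE {B : Type*} {W : Type*} [Group W] {M : CoxeterMatrix B}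
    (cs : CoxeterSystem M W) (u x : W) : Prop :=
  ∃ ω : List B, cs.IsReduced ω ∧ cs.wordProd ω = x ∧
    ∃ ω' : List B, ω'.Sublist ω ∧ cs.wordProd ω' = u

namespace List

variable {α : Type*}

theorem cons_sublist_cons_of_isChain_ne (hα : ∀ a : α, {b | b ≠ a}.Subsingleton)
    {a : α} {l₁ l₂ : List α} (h₁ : IsChain (· ≠ ·) (a :: l₁))
    (h₂ : IsChain (· ≠ ·) (a :: l₂)) (hlen : l₁.length ≤ l₂.length) :
    (a :: l₁).Sublist (a :: l₂) := by
  induction l₂ generalizing a l₁ with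
  | nil => simp_all
  | cons c l₂ ih =>
    rcases l₁ with _ | ⟨b, l₁⟩
    · exact (nil_sublist _).cons_cons a
    · obtain rfl : b = c :=
        hα a (isChain_cons_cons.mp h₁).1.symm (isChain_cons_cons.mp h₂).1.symm
      exact (ih h₁.tail h₂.tail (by simpa using hlen)).cons_cons a

theorem sublist_of_isChain_ne_of_length_lt (hα : ∀ a : α, {b | b ≠ a}.Subsingleton)
    {l₁ l₂ : List α} (h₁ : IsChain (· ≠ ·) l₁) (h₂ : IsChain (· ≠ ·) l₂)
    (hlen : l₁.length < l₂.length) : l₁.Sublist l₂ := by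
  rcases l₁ with _ | ⟨a, l₁⟩
  · exact nil_sublist _
  rcases l₂ with _ | ⟨b, _ | ⟨c, l₂⟩⟩
  · simp at hlen
  · simp at hlen
  by_cases hab : a = b
  · subst hab
    exact cons_sublist_cons_of_isChain_ne hα h₁ h₂ (Nat.succ_lt_succ_iff.mp hlen).le
  · obtain rfl : a = c := hα b hab (isChain_cons_cons.mp h₂).1.symm
    exact (cons_sublist_cons_of_isChain_ne hα h₁ h₂.tail
      (Nat.lt_succ_iff.mp (Nat.succ_lt_succ_iff.mp hlen))).cons b

end List

theorem Finset.sum_filter_add_comp_of_involutive {α M : Type*} [AddCommMonoid M]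
    {f : α → α} (hf : Function.Involutive f) {p : α → Prop} [DecidablePred p]
    (hp : ∀ a, p (f a) ↔ ¬p a) {s : Finset α} (hs : ∀ a ∈ s, f a ∈ s) (g : α → M) :
    ∑ a ∈ s with p a, (g a + g (f a)) = ∑ a ∈ s, g a := by
  rw [sum_add_distrib, ← sum_filter_add_sum_filter_not s p g]
  congr 1
  refine sum_nbij' f f ?_ ?_ (fun a _ => hf a) (fun a _ => hf a) (fun _ _ => rfl)
  · intro a ha
    simp only [mem_filter] at ha ⊢
    exact ⟨hs a ha.1, fun h => (hp a).mp h ha.2⟩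
  · intro a ha
    simp only [mem_filter] at ha ⊢
    exact ⟨hs a ha.1, (hp a).mpr ha.2⟩

namespace Function.Involutive

variable {α : Type*} [DecidableEq α] {f : α → α} {s : Finset α} {a : α}

theorem apply_mem_union_image (hf : Involutive f) (ha : a ∈ s ∪ s.image f) :
    f a ∈ s ∪ s.image f := by
  simp only [Finset.mem_union, Finset.mem_image] at ha ⊢
  rcases ha with ha | ⟨b, hb, rfl⟩
  · exact Or.inr ⟨a, ha, rfl⟩
  · exact Or.inl (by rwa [hf b])

theorem apply_mem_inter_image (hf : Involutive f) (ha : a ∈ s ∩ s.image f) :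
    f a ∈ s ∩ s.image f := by
  simp only [Finset.mem_inter, Finset.mem_image] at ha ⊢
  obtain ⟨ha, b, hb, rfl⟩ := ha
  exact ⟨by rwa [hf b], f b, ha, rfl⟩

end Function.Involutive

namespace CoxeterSystem

variable {B W : Type*} [Group W] {M : CoxeterMatrix B} (cs : CoxeterSystem M W)

theorem IsReduced.isChain_ne {ω : List B} (h : cs.IsReduced ω) : ω.IsChain (· ≠ ·) := by
  induction ω with
  | nil => exact .nil
  | cons c ω ih =>
    have htail : cs.IsReduced ω := by simpa using h.drop 1
    rcases ω with _ | ⟨d, ω⟩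
    · exact .singleton c
    · refine List.isChain_cons_cons.mpr ⟨?_, ih htail⟩
      rintro rfl
      have hlen := h.eq
      simp only [wordProd_cons, simple_mul_simple_cancel_left, List.length_cons] at hlen
      have := cs.length_wordProd_le ω
      omega

theorem length_le_of_bruhatLE {u x : W} (h : cs.bruhatLE u x) : cs.length u ≤ cs.length x := by
  obtain ⟨ω, hω, rfl, ω', hsub, rfl⟩ := h
  exact (cs.length_wordProd_le ω').trans (hω.eq ▸ hsub.length_le)

theorem bruhatLE_of_length_lt (hB : ∀ a : B, {b | b ≠ a}.Subsingleton) {u x : W}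
    (h : cs.length u < cs.length x) : cs.bruhatLE u x := by
  obtain ⟨ω, hω, rfl⟩ := cs.exists_isReduced x
  obtain ⟨ζ, hζ, rfl⟩ := cs.exists_isReduced u
  refine ⟨ω, hω, rfl, ζ, ?_, rfl⟩
  exact List.sublist_of_isChain_ne_of_length_lt hB (hζ.isChain_ne cs) (hω.isChain_ne cs)
    (by rwa [← hζ.eq, ← hω.eq])

variable {R H : Type*} [CommRing R] [Ring H] [Algebra R H] {q : R} {T : W → H}

theorem simple_add_one_mul_of_not_isLeftDescent
    (hmul : ∀ x y : W, cs.length (x * y) = cs.length x + cs.length y → T x * T y = T (x * y))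
    {i : B} {y : W} (hy : ¬cs.IsLeftDescent y i) :
    (T (cs.simple i) + 1) * T y = T y + T (cs.simple i * y) := by
  rw [add_mul, one_mul, add_comm, hmul _ _ (by rw [cs.not_isLeftDescent_iff.mp hy,
    cs.length_simple, add_comm])]

theorem simple_add_one_mul_of_isLeftDescent (hone : T 1 = 1)
    (hmul : ∀ x y : W, cs.length (x * y) = cs.length x + cs.length y → T x * T y = T (x * y))
    {i : B} (hsq : T (cs.simple i) * T (cs.simple i) = q • T 1 + (q - 1) • T (cs.simple i))
    {y : W} (hy : cs.IsLeftDescent y i) :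
    (T (cs.simple i) + 1) * T y = q • (T y + T (cs.simple i * y)) := by
  have hz : T (cs.simple i) * T (cs.simple i * y) = T y := by
    rw [hmul _ _ (by rw [cs.simple_mul_simple_cancel_left, cs.length_simple, add_comm,
      cs.isLeftDescent_iff.mp hy]), cs.simple_mul_simple_cancel_left]
  calc (T (cs.simple i) + 1) * T y
      = (T (cs.simple i) * T (cs.simple i)) * T (cs.simple i * y) + T y := by
        rw [mul_assoc, hz, add_mul, one_mul]
    _ = q • (T y + T (cs.simple i * y)) := by
      rw [hsq, add_mul, smul_mul_assoc, smul_mul_assoc, hone, one_mul, hz, sub_smul, one_smul,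
        smul_add]
      abel

theorem isLeftDescent_simple_mul_iff {w : W} {i : B} :
    cs.IsLeftDescent (cs.simple i * w) i ↔ ¬cs.IsLeftDescent w i := by
  rw [cs.isLeftDescent_iff_not_isLeftDescent_mul (w := w), not_not]

section DescentClosed

variable [DecidableEq W] {i : B} [DecidablePred (cs.IsLeftDescent · i)] {A : Finset W}

-- An ascent `sy` of `sA` comes from a descent `y ∈ A`, so `sy ∈ A` already.
theorem filter_not_isLeftDescent_union_image
    (hA : ∀ y ∈ A, cs.IsLeftDescent y i → cs.simple i * y ∈ A) :
    {y ∈ A ∪ A.image (cs.simple i * ·) | ¬cs.IsLeftDescent y i} =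
      {y ∈ A | ¬cs.IsLeftDescent y i} := by
  ext z
  simp only [Finset.mem_filter, Finset.mem_union, Finset.mem_image]
  constructor
  · rintro ⟨hz | ⟨y, hy, rfl⟩, hzasc⟩
    · exact ⟨hz, hzasc⟩
    · exact ⟨hA y hy (not_not.mp (cs.isLeftDescent_simple_mul_iff.not.mp hzasc)), hzasc⟩
  · exact fun ⟨hz, hzasc⟩ => ⟨Or.inl hz, hzasc⟩

theorem filter_isLeftDescent_inter_image
    (hA : ∀ y ∈ A, cs.IsLeftDescent y i → cs.simple i * y ∈ A) :
    {y ∈ A ∩ A.image (cs.simple i * ·) | cs.IsLeftDescent y i} =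
      {y ∈ A | cs.IsLeftDescent y i} := by
  ext z
  simp only [Finset.mem_filter, Finset.mem_inter, Finset.mem_image]
  exact ⟨fun ⟨⟨hz, _⟩, hzd⟩ => ⟨hz, hzd⟩,
    fun ⟨hz, hzd⟩ => ⟨⟨hz, _, hA z hz hzd, cs.simple_mul_simple_cancel_left i⟩, hzd⟩⟩

end DescentClosed

theorem simple_add_one_mul_sum [DecidableEq W] (hone : T 1 = 1)
    (hmul : ∀ x y : W, cs.length (x * y) = cs.length x + cs.length y → T x * T y = T (x * y))
    {i : B} (hsq : T (cs.simple i) * T (cs.simple i) = q • T 1 + (q - 1) • T (cs.simple i))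
    {A : Finset W} (hA : ∀ y ∈ A, cs.IsLeftDescent y i → cs.simple i * y ∈ A) :
    (T (cs.simple i) + 1) * ∑ y ∈ A, T y =
      (∑ y ∈ A ∪ A.image (cs.simple i * ·), T y)
        + q • ∑ y ∈ A ∩ A.image (cs.simple i * ·), T y := by
  classical
  have hf : Function.Involutive (cs.simple i * ·) := fun _ => cs.simple_mul_simple_cancel_left i
  calc (T (cs.simple i) + 1) * ∑ y ∈ A, T y
      = ∑ y ∈ A with ¬cs.IsLeftDescent y i, (T (cs.simple i) + 1) * T y
        + ∑ y ∈ A with cs.IsLeftDescent y i, (T (cs.simple i) + 1) * T y := by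
        rw [Finset.sum_filter_not_add_sum_filter, Finset.mul_sum]
    _ = ∑ y ∈ A with ¬cs.IsLeftDescent y i, (T y + T (cs.simple i * y))
        + q • ∑ y ∈ A with cs.IsLeftDescent y i, (T y + T (cs.simple i * y)) := by
        rw [Finset.smul_sum]
        congr 1 <;> refine Finset.sum_congr rfl fun y hy => ?_ <;> rw [Finset.mem_filter] at hy
        · exact cs.simple_add_one_mul_of_not_isLeftDescent hmul hy.2
        · exact cs.simple_add_one_mul_of_isLeftDescent hone hmul hsq hy.2
    _ = _ := by
        rw [← cs.filter_not_isLeftDescent_union_image hA,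
          ← cs.filter_isLeftDescent_inter_image hA,
          Finset.sum_filter_add_comp_of_involutive hf (fun _ => cs.isLeftDescent_simple_mul_iff.not)
            (fun _ => hf.apply_mem_union_image),
          Finset.sum_filter_add_comp_of_involutive hf (fun _ => cs.isLeftDescent_simple_mul_iff)
            (fun _ => hf.apply_mem_inter_image)]

end CoxeterSystem

/-- Let `(W,S)` be a dihedral Coxeter system (`|S| = 2`), `s ∈ S`,
`x ∈ W`, and `A = {y ∈ W : y ≤ x}` (Bruhat order).  Then in the Hecke algebra
`(T_s + 1) * ∑_{y ∈ A} T_y = ∑_{y ∈ A ∪ sA} T_y + v⁻² • ∑_{y ∈ A ∩ sA} T_y`. -/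
theorem hecke_dihedral_Ts_add_one_mul_sum
    {B : Type*} {W : Type*} [Group W] [DecidableEq W] {M : CoxeterMatrix B}
    (cs : CoxeterSystem M W)
    (hdihedral : Nat.card B = 2)
    {H : Type*} [Ring H] [Algebra (LaurentPolynomial ℤ) H]
    (Tb : W → H)
    (hTone : Tb 1 = 1)
    (hTmul : ∀ x y : W, cs.length (x * y) = cs.length x + cs.length y →
      Tb x * Tb y = Tb (x * y))
    (hTs : ∀ i : B, Tb (cs.simple i) * Tb (cs.simple i) =
      (LaurentPolynomial.T (-2) : LaurentPolynomial ℤ) • Tb 1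
        + ((LaurentPolynomial.T (-2) : LaurentPolynomial ℤ) - 1) • Tb (cs.simple i))
    (i : B) (x : W)
    (A : Finset W) (hA : ∀ y : W, y ∈ A ↔ cs.bruhatLE y x) :
    (Tb (cs.simple i) + 1) * ∑ y ∈ A, Tb y =
      (∑ y ∈ A ∪ A.image (fun y => cs.simple i * y), Tb y)
        + (LaurentPolynomial.T (-2) : LaurentPolynomial ℤ) •
            ∑ y ∈ A ∩ A.image (fun y => cs.simple i * y), Tb y := by
  have hB : ∀ a : B, {b | b ≠ a}.Subsingleton := fun a _ hb _ hc =>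
    ((Nat.card_eq_two_iff' a).mp hdihedral).unique hb hc
  refine cs.simple_add_one_mul_sum hTone hTmul (hTs i) fun y hy hdesc => (hA _).mpr ?_
  exact cs.bruhatLE_of_length_lt hB
    (hdesc.trans_le (cs.length_le_of_bruhatLE ((hA y).mp hy)))
end

section
/- Let V be a finite-dimensional vector space over an infinite field k of characteristic ≠ 2, s a reflection on V, α ∈ V* a linear form with kernel the reflecting hyperplane V^s, and R the polynomial ring on V. Then R = R^s ⊕ α·R^s as graded R^s-modules; in particular R is free of rank 2 over R^s with basis {1, α}. -/
/-!
Precomposition with `s` is an involution of `R`, and `2` is invertible, so every `f` splits as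
`(f + f ∘ s) / 2 + (f - f ∘ s) / 2`. Since `v - s v = β v • a` for a fixed vector `a`, the
difference `f - f ∘ s` is divisible by `β` (check it on generators), and the quotient is again
invariant because `R` is a domain: over an infinite field polynomial functions are polynomials.
Uniqueness comes from applying `s` to `g + β h = 0`, which gives `g - β h = 0`; homogeneity of
the components follows from uniqueness applied to the rescaled decomposition.
-/

set_option synthInstance.maxHeartbeats 400000
set_option maxHeartbeats 1000000
noncomputable section

/-- The algebra of polynomial (regular) functions on a vector space `V`:
the subalgebra of `V → k` generated by the linear forms. -/
def PolyFun (k V : Type*) [CommRing k] [AddCommGroup V] [Module k V] :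
    Subalgebra k (V → k) :=
  Algebra.adjoin k (Set.range fun φ : Module.Dual k V => ⇑φ)

/-- Restriction of functions to a subset `X`, as an algebra homomorphism. -/
def restrictAlgHom (k : Type*) {V : Type*} [CommRing k] (X : Set V) :
    (V → k) →ₐ[k] (X → k) where
  toFun f x := f x
  map_one' := rfl
  map_mul' _ _ := rfl
  map_zero' := rfl
  map_add' _ _ := rfl
  commutes' _ := rfl

/-- The algebra of regular functions on a subset `X ⊆ V`: restrictions of
polynomial functions. -/
def RegFun (k : Type*) {V : Type*} [CommRing k] [AddCommGroup V] [Module k V]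
    (X : Set V) : Subalgebra k (X → k) :=
  (PolyFun k V).map (restrictAlgHom k X)

/-- The subalgebra of polynomial functions invariant under `s : V → V`. -/
def InvPolyFun (k : Type*) {V : Type*} [CommRing k] [AddCommGroup V] [Module k V]
    (s : V → V) : Subalgebra k (V → k) where
  carrier := {f | f ∈ PolyFun k V ∧ ∀ v, f (s v) = f v}
  mul_mem' := fun ha hb => ⟨mul_mem ha.1 hb.1, fun v => by
    simp only [Pi.mul_apply, ha.2 v, hb.2 v]⟩
  add_mem' := fun ha hb => ⟨add_mem ha.1 hb.1, fun v => by
    simp only [Pi.add_apply, ha.2 v, hb.2 v]⟩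
  algebraMap_mem' := fun r => ⟨Subalgebra.algebraMap_mem _ r, fun _ => rfl⟩

theorem invPolyFun_le (k : Type*) {V : Type*} [CommRing k] [AddCommGroup V]
    [Module k V] (s : V → V) : InvPolyFun k s ≤ PolyFun k V :=
  fun _ hf => hf.1

/-- `R` is a module over its subring `R^s` of `s`-invariants. -/
noncomputable instance instModInvPolyFun (k : Type*) {V : Type*} [CommRing k]
    [AddCommGroup V] [Module k V] (s : V → V) :
    Module ↥(InvPolyFun k s) ↥(PolyFun k V) :=
  ((Subalgebra.inclusion (invPolyFun_le k s)).toRingHom).toModule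

instance (k : Type*) {V : Type*} [CommRing k] [AddCommGroup V] [Module k V]
    (s : V → V) :
    SMulCommClass ↥(InvPolyFun k s) ↥(PolyFun k V) ↥(PolyFun k V) :=
  ⟨fun g p f => mul_left_comm (Subalgebra.inclusion (invPolyFun_le k s) g) p f⟩

/-- A function on `V` is homogeneous of degree `m` (in the natural grading,
which is half of the grading of the paper, where `V*` sits in degree `2`). -/
def IsHomogeneousFun {k V : Type*} [CommRing k] [AddCommGroup V] [Module k V]
    (f : V → k) (m : ℕ) : Prop :=
  ∀ (c : k) (v : V), f (c • v) = c ^ m * f v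

namespace PolyFun

variable {k V W : Type*} [Field k] [AddCommGroup V] [Module k V] [AddCommGroup W] [Module k W]

theorem comp_mem (t : V →ₗ[k] W) {f : W → k} (hf : f ∈ PolyFun k W) :
    f ∘ t ∈ PolyFun k V := by
  let precomp : (W → k) →ₐ[k] (V → k) :=
    { toFun g := g ∘ t, map_one' := rfl, map_mul' _ _ := rfl, map_zero' := rfl,
      map_add' _ _ := rfl, commutes' _ := rfl }
  suffices PolyFun k W ≤ (PolyFun k V).comap precomp from this hf
  refine Algebra.adjoin_le ?_
  rintro _ ⟨φ, rfl⟩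
  exact Algebra.subset_adjoin ⟨φ ∘ₗ t, rfl⟩

def coordAeval {ι : Type*} (b : Module.Basis ι k V) : MvPolynomial ι k →ₐ[k] (V → k) :=
  MvPolynomial.aeval fun i => ⇑(b.coord i)

theorem coordAeval_apply {ι : Type*} (b : Module.Basis ι k V) (p : MvPolynomial ι k) (v : V) :
    coordAeval b p v = MvPolynomial.eval (b.repr v) p := by
  have h := congrArg (fun F => F p)
    (MvPolynomial.comp_aeval (f := fun i => ⇑(b.coord i)) (Pi.evalAlgHom k (fun _ : V => k) v))
  simpa [coordAeval, MvPolynomial.coe_aeval_eq_eval] using h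

theorem le_range_coordAeval {ι : Type*} [Fintype ι] (b : Module.Basis ι k V) :
    PolyFun k V ≤ (coordAeval b).range := by
  refine Algebra.adjoin_le ?_
  rintro _ ⟨φ, rfl⟩
  refine (AlgHom.mem_range _).2 ⟨∑ i, MvPolynomial.C (φ (b i)) * MvPolynomial.X i, ?_⟩
  funext v
  rw [coordAeval_apply]
  simp only [map_sum, map_mul, MvPolynomial.eval_C, MvPolynomial.eval_X]
  conv_rhs => rw [← b.sum_repr v]
  simp only [map_sum, map_smul, smul_eq_mul, mul_comm]

theorem coordAeval_injective [Infinite k] {ι : Type*} [Fintype ι] (b : Module.Basis ι k V) :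
    Function.Injective (coordAeval b) := by
  refine (injective_iff_map_eq_zero _).2 fun p hp => MvPolynomial.funext fun x => ?_
  have hx : ⇑(b.repr (b.equivFun.symm x)) = x := b.equivFun.apply_symm_apply x
  simpa only [coordAeval_apply, hx, Pi.zero_apply, map_zero] using congrFun hp (b.equivFun.symm x)

theorem eq_zero_or_eq_zero_of_mul_eq_zero [Infinite k] [FiniteDimensional k V] {f g : V → k}
    (hf : f ∈ PolyFun k V) (hg : g ∈ PolyFun k V) (hfg : f * g = 0) : f = 0 ∨ g = 0 := by
  let b := Module.finBasis k V
  obtain ⟨p, rfl⟩ := (AlgHom.mem_range _).1 (le_range_coordAeval b hf)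
  obtain ⟨q, rfl⟩ := (AlgHom.mem_range _).1 (le_range_coordAeval b hg)
  rw [← map_mul, ← map_zero (coordAeval b), (coordAeval_injective b).eq_iff, mul_eq_zero] at hfg
  rcases hfg with rfl | rfl <;> simp

end PolyFun

theorem Module.Dual.exists_sub_eq_smul_of_fixed {k V : Type*} [Field k] [AddCommGroup V]
    [Module k V] {β : Module.Dual k V} (hβ : β ≠ 0) {s : V →ₗ[k] V}
    (hfix : ∀ v, β v = 0 → s v = v) : ∃ a : V, ∀ v, v - s v = β v • a := by
  obtain ⟨e₀, he₀⟩ : ∃ e₀, β e₀ ≠ 0 := by simpa [DFunLike.ne_iff] using hβ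
  set e := (β e₀)⁻¹ • e₀
  have hbe : β e = 1 := by simp [e, inv_mul_cancel₀ he₀]
  refine ⟨e - s e, fun v => ?_⟩
  have hu := hfix (v - β v • e) (by simp [hbe])
  rw [map_sub, map_smul] at hu
  linear_combination (norm := module) -hu

section Reflection

variable {k V : Type*} [Field k] [AddCommGroup V] [Module k V] {β : Module.Dual k V}

theorem InvPolyFun.comp_mem {s : V → V} (t : V →ₗ[k] V) (hts : ∀ v, t (s v) = s (t v))
    {f : V → k} (hf : f ∈ InvPolyFun k s) : f ∘ t ∈ InvPolyFun k s :=
  ⟨PolyFun.comp_mem t hf.1, fun v => by simp only [Function.comp_apply, hts, hf.2]⟩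

theorem PolyFun.exists_sub_comp_eq_mul {s : V →ₗ[k] V} {a : V} (hsa : ∀ v, v - s v = β v • a)
    {f : V → k} (hf : f ∈ PolyFun k V) : ∃ q ∈ PolyFun k V, f - f ∘ s = β * q := by
  induction hf using Algebra.adjoin_induction with
  | mem x hx =>
    obtain ⟨φ, rfl⟩ := hx
    refine ⟨fun _ => φ a, algebraMap_mem _ (φ a), funext fun v => ?_⟩
    simp [← map_sub, hsa]
  | algebraMap r => exact ⟨0, zero_mem _, by ext; simp⟩
  | add x y _ _ hx hy =>
    obtain ⟨q₁, hq₁, e₁⟩ := hx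
    obtain ⟨q₂, hq₂, e₂⟩ := hy
    refine ⟨q₁ + q₂, add_mem hq₁ hq₂, ?_⟩
    rw [Pi.add_comp]
    linear_combination e₁ + e₂
  | mul x y hx' hy' hx hy =>
    obtain ⟨q₁, hq₁, e₁⟩ := hx
    obtain ⟨q₂, hq₂, e₂⟩ := hy
    refine ⟨x * q₂ + q₁ * (y ∘ s), add_mem (mul_mem hx' hq₂)
      (mul_mem hq₁ (PolyFun.comp_mem s hy')), ?_⟩
    rw [Pi.mul_comp]
    linear_combination x * e₂ + (y ∘ s) * e₁

variable [Infinite k] [FiniteDimensional k V]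

theorem PolyFun.eq_zero_of_dual_mul_eq_zero (hβ : β ≠ 0) {h : V → k} (hh : h ∈ PolyFun k V)
    (H : β * h = 0) : h = 0 :=
  (PolyFun.eq_zero_or_eq_zero_of_mul_eq_zero (Algebra.subset_adjoin ⟨β, rfl⟩) hh H).resolve_left
    (by simpa [DFunLike.ext_iff, funext_iff] using hβ)

theorem InvPolyFun.mem_of_sub_comp_eq_mul {s : V →ₗ[k] V} (hs : ∀ v, s (s v) = v) (hβ : β ≠ 0)
    (hsβ : ∀ v, β (s v) = -β v) {f q : V → k} (hq : q ∈ PolyFun k V)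
    (H : f - f ∘ s = β * q) : q ∈ InvPolyFun k s := by
  have hdiff : β * (q - q ∘ s) = 0 := funext fun v => by
    have e₁ := congrFun H v
    have e₂ := congrFun H (s v)
    simp only [Pi.sub_apply, Pi.mul_apply, Function.comp_apply, hs, hsβ] at e₁ e₂
    simp only [Pi.mul_apply, Pi.sub_apply, Function.comp_apply, Pi.zero_apply]
    linear_combination -(e₁ + e₂)
  have hq_eq : q - q ∘ s = 0 :=
    PolyFun.eq_zero_of_dual_mul_eq_zero hβ (sub_mem hq (PolyFun.comp_mem s hq)) hdiff
  exact ⟨hq, fun v => (sub_eq_zero.1 (congrFun hq_eq v)).symm⟩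

theorem InvPolyFun.eq_zero_of_add_mul_eq_zero (hchar : (2 : k) ≠ 0) {s : V → V} (hβ : β ≠ 0)
    (hsβ : ∀ v, β (s v) = -β v) {g h : V → k} (hg : g ∈ InvPolyFun k s)
    (hh : h ∈ InvPolyFun k s) (H : g + β * h = 0) : g = 0 ∧ h = 0 := by
  have hg0 : g = 0 := funext fun v => by
    have e₁ := congrFun H v
    have e₂ := congrFun H (s v)
    simp only [Pi.add_apply, Pi.mul_apply, Pi.zero_apply, hsβ, hg.2, hh.2] at e₁ e₂
    have h2g : 2 * g v = 0 := by linear_combination e₁ + e₂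
    exact (mul_eq_zero.1 h2g).resolve_left hchar
  refine ⟨hg0, PolyFun.eq_zero_of_dual_mul_eq_zero hβ hh.1 ?_⟩
  simpa [hg0] using H

theorem InvPolyFun.exists_add_mul (hchar : (2 : k) ≠ 0) {s : V →ₗ[k] V} (hs : ∀ v, s (s v) = v)
    (hβ : β ≠ 0) (hfix : ∀ v, β v = 0 → s v = v) (hsβ : ∀ v, β (s v) = -β v) {f : V → k}
    (hf : f ∈ PolyFun k V) : ∃ g ∈ InvPolyFun k s, ∃ h ∈ InvPolyFun k s, f = g + β * h := by
  obtain ⟨a, hsa⟩ := Module.Dual.exists_sub_eq_smul_of_fixed hβ hfix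
  obtain ⟨q, hq, H⟩ := PolyFun.exists_sub_comp_eq_mul hsa hf
  have hq' := InvPolyFun.mem_of_sub_comp_eq_mul hs hβ hsβ hq H
  refine ⟨(2 : k)⁻¹ • (f + f ∘ s), ⟨Subalgebra.smul_mem _ (add_mem hf (PolyFun.comp_mem s hf)) _,
    fun v => ?_⟩, (2 : k)⁻¹ • q, Subalgebra.smul_mem _ hq' _, ?_⟩
  · simp only [Pi.smul_apply, Pi.add_apply, Function.comp_apply, hs, add_comm]
  · rw [mul_smul_comm, ← H]
    funext v
    simp only [Pi.add_apply, Pi.smul_apply, Pi.sub_apply, Function.comp_apply, smul_eq_mul]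
    linear_combination (mul_inv_cancel₀ hchar).symm * f v

end Reflection

section Decomposition

variable {k V : Type*} [Field k] [AddCommGroup V] [Module k V] {β : Module.Dual k V}

def PolyFun.ofDual (β : Module.Dual k V) : PolyFun k V :=
  ⟨β, Algebra.subset_adjoin ⟨β, rfl⟩⟩

def InvPolyFun.addMulLinearMap (s : V → V) (β : Module.Dual k V) :
    (InvPolyFun k s × InvPolyFun k s) →ₗ[InvPolyFun k s] PolyFun k V where
  toFun gh := Subalgebra.inclusion (invPolyFun_le k s) gh.1 +
    PolyFun.ofDual β * Subalgebra.inclusion (invPolyFun_le k s) gh.2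
  map_add' _ _ := by simp only [Prod.fst_add, Prod.snd_add, map_add]; ring
  map_smul' r _ := by
    simp only [Prod.smul_fst, Prod.smul_snd, smul_eq_mul, map_mul, RingHom.id_apply]
    change _ = Subalgebra.inclusion (invPolyFun_le k s) r * _
    ring

variable [Infinite k] [FiniteDimensional k V]

theorem InvPolyFun.addMulLinearMap_bijective (hchar : (2 : k) ≠ 0) {s : V →ₗ[k] V}
    (hs : ∀ v, s (s v) = v) (hβ : β ≠ 0) (hfix : ∀ v, β v = 0 → s v = v)
    (hsβ : ∀ v, β (s v) = -β v) : Function.Bijective (addMulLinearMap s β) := by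
  refine ⟨(injective_iff_map_eq_zero _).2 fun gh H => ?_, fun f => ?_⟩
  · obtain ⟨hg, hh⟩ := eq_zero_of_add_mul_eq_zero hchar hβ hsβ gh.1.2 gh.2.2
      (congrArg Subtype.val H)
    exact Prod.ext (Subtype.ext hg) (Subtype.ext hh)
  · obtain ⟨g, hg, h, hh, hf⟩ := exists_add_mul hchar hs hβ hfix hsβ f.2
    exact ⟨(⟨g, hg⟩, ⟨h, hh⟩), Subtype.ext hf.symm⟩

/-- Scaling by `c` commutes with `s`, so `f ∘ (c • ·) = c ^ m • f` has the two decompositions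
`g ∘ (c • ·) + β * (c • h ∘ (c • ·))` and `c ^ m • g + β * (c ^ m • h)`, which must agree. -/
theorem InvPolyFun.isHomogeneousFun_of_add_mul (hchar : (2 : k) ≠ 0) {s : V →ₗ[k] V}
    (hβ : β ≠ 0) (hsβ : ∀ v, β (s v) = -β v) {g h : V → k} (hg : g ∈ InvPolyFun k s)
    (hh : h ∈ InvPolyFun k s) {m : ℕ} (hf : IsHomogeneousFun (g + ⇑β * h) m) :
    IsHomogeneousFun g m ∧ ∀ (c : k) (v : V), h (c • v) * c = c ^ m * h v := by
  suffices key : ∀ c : k, g ∘ (c • LinearMap.id : V →ₗ[k] V) - c ^ m • g = 0 ∧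
      c • h ∘ (c • LinearMap.id : V →ₗ[k] V) - c ^ m • h = 0 by
    refine ⟨fun c v => ?_, fun c v => ?_⟩
    · simpa [sub_eq_zero] using congrFun (key c).1 v
    · simpa [sub_eq_zero, mul_comm] using congrFun (key c).2 v
  intro c
  let t : V →ₗ[k] V := c • LinearMap.id
  have hts : ∀ v, t (s v) = s (t v) := fun v => (map_smul s c v).symm
  refine eq_zero_of_add_mul_eq_zero hchar hβ hsβ
    (sub_mem (comp_mem t hts hg) (Subalgebra.smul_mem _ hg _))
    (sub_mem (Subalgebra.smul_mem _ (comp_mem t hts hh) c) (Subalgebra.smul_mem _ hh _))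
    (funext fun v => ?_)
  have := hf c v
  simp only [Pi.add_apply, Pi.mul_apply, map_smul, smul_eq_mul, LinearMap.coe_smul,
    LinearMap.id_coe, Pi.sub_apply, Function.comp_apply, Pi.smul_apply, id_eq,
    Pi.zero_apply] at this ⊢
  linear_combination this

end Decomposition

/-- Let `V` be a finite-dimensional vector space over an infinite
field `k` of characteristic `≠ 2`, `s : V → V` a reflection (an involution
whose fixed space is the kernel of a nonzero linear form `β`, with
`β ∘ s = -β`), `R` the ring of polynomial functions on `V` and `R^s ⊆ R` the
invariant subring.  Then `R = R^s ⊕ β·R^s` as graded `R^s`-modules: every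
`f ∈ R` is uniquely `f = g + β·h` with `g, h ∈ R^s`; in particular `R` is free
of rank `2` over `R^s` with basis `{1, β}`, and if `f` is homogeneous of
degree `m` then `g` is homogeneous of degree `m` and `h` of degree `m - 1`. -/
theorem polyFun_free_rank_two_over_invariants
    {k V : Type*} [Field k] [Infinite k] (hchar : (2 : k) ≠ 0)
    [AddCommGroup V] [Module k V] [FiniteDimensional k V]
    (s : V ≃ₗ[k] V) (hs : ∀ v, s (s v) = v)
    (β : Module.Dual k V) (hβ : β ≠ 0)
    (hker : ∀ v, β v = 0 ↔ s v = v)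
    (hsβ : ∀ v, β (s v) = - β v) :
    (∀ f : ↥(PolyFun k V), ∃! gh : ↥(InvPolyFun k ⇑s) × ↥(InvPolyFun k ⇑s),
      f = Subalgebra.inclusion (invPolyFun_le k ⇑s) gh.1 +
          (⟨⇑β, Algebra.subset_adjoin ⟨β, rfl⟩⟩ : ↥(PolyFun k V)) *
            Subalgebra.inclusion (invPolyFun_le k ⇑s) gh.2) ∧
    (∃ b : Module.Basis (Fin 2) ↥(InvPolyFun k ⇑s) ↥(PolyFun k V),
      b 0 = 1 ∧ b 1 = (⟨⇑β, Algebra.subset_adjoin ⟨β, rfl⟩⟩ : ↥(PolyFun k V))) ∧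
    (∀ (f : ↥(PolyFun k V)) (g h : ↥(InvPolyFun k ⇑s)),
      f = Subalgebra.inclusion (invPolyFun_le k ⇑s) g +
          (⟨⇑β, Algebra.subset_adjoin ⟨β, rfl⟩⟩ : ↥(PolyFun k V)) *
            Subalgebra.inclusion (invPolyFun_le k ⇑s) h →
      ∀ m : ℕ, IsHomogeneousFun (f : V → k) m →
        IsHomogeneousFun (g : V → k) m ∧
        ∀ (c : k) (v : V), (h : V → k) (c • v) * c = c ^ m * (h : V → k) v) := by
  have hbij : Function.Bijective (InvPolyFun.addMulLinearMap s β) :=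
    InvPolyFun.addMulLinearMap_bijective (s := s.toLinearMap) hchar hs hβ (fun v => (hker v).1) hsβ
  refine ⟨fun f => ?_,
    ⟨(Module.Basis.finTwoProd _).map (LinearEquiv.ofBijective _ hbij), ?_, ?_⟩, ?_⟩
  · obtain ⟨gh, hgh, huniq⟩ := hbij.existsUnique f
    exact ⟨gh, hgh.symm, fun gh' hgh' => huniq gh' hgh'.symm⟩
  · simp [InvPolyFun.addMulLinearMap]
  · simp [InvPolyFun.addMulLinearMap, PolyFun.ofDual]
  · rintro f g h rfl m hm
    exact InvPolyFun.isHomogeneousFun_of_add_mul (s := s.toLinearMap) hchar hβ hsβ g.2 h.2 hm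
end
end

section
/- Let V be a finite-dimensional vector space over an infinite field k of characteristic ≠ 2, s a reflection, R the polynomial ring on V graded with V* in degree 2, R^s the invariants, α a degree-2 equation of the reflecting hyperplane. Then the map R[2] → Hom_{R^s}(R, R^s) sending 1 ↦ α* and α ↦ 1* (where {1*, α*} is the basis dual to the R^s-basis {1, α} of R) is an isomorphism of graded R-modules. Consequently, the functors M ↦ R[2] ⊗_{R^s} M and M ↦ Hom_{R^s}(R, M) from graded R^s-modules to graded R-modules are naturally isomorphic. -/
set_option synthInstance.maxHeartbeats 1000000
set_option maxHeartbeats 4000000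
noncomputable section

/-! Over `A = R^s`, `R` is free with basis `{1, β}` and `β² ∈ A`. In these coordinates
multiplication by `β` is `(x₀, x₁) ↦ (β² x₁, x₀)`, so on the dual `β • β* = 1*` and
`β • 1* = β² • β*`; hence the map sending the basis `{1, β}` to the basis `{β*, 1*}`
commutes with multiplication by `β`, i.e. it is `R`-linear. Since `R` is finite free over
`A`, `Hom_A(R, A) ⊗_A M ≅ Hom_A(R, M)`, and composing with this isomorphism gives the
second claim. -/

theorem LinearMap.bijective_of_map_basis {A M N ι : Type*} [CommSemiring A] [AddCommMonoid M]
    [AddCommMonoid N] [Module A M] [Module A N] (f : M →ₗ[A] N) (b : Module.Basis ι A M)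
    (b' : Module.Basis ι A N) (h : ∀ i, f (b i) = b' i) : Function.Bijective f := by
  have : f = b.equiv b' (Equiv.refl ι) := b.ext fun i => by simp [h]
  exact this ▸ (b.equiv b' _).bijective

section QuadraticBasis

variable {A R : Type*} [CommSemiring A] [CommSemiring R] [Module A R] [SMulCommClass A R R]

theorem repr_basis_one_mul (b : Module.Basis (Fin 2) A R) (hb0 : b 0 = 1) {c : A}
    (hc : b 1 * b 1 = c • 1) (x : R) :
    b.repr (b 1 * x) 0 = c * b.repr x 1 ∧ b.repr (b 1 * x) 1 = b.repr x 0 := by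
  have hx : b 1 * x = (c * b.repr x 1) • b 0 + b.repr x 0 • b 1 := by
    conv_lhs => rw [← b.sum_repr x, Fin.sum_univ_two]
    rw [mul_add, mul_smul_comm, mul_smul_comm, hc, hb0, mul_one, smul_smul, mul_comm, add_comm]
  simp [hx]

variable [IsScalarTower A R R]

theorem map_mul_eq_comp_mulLeft (b : Module.Basis (Fin 2) A R) (hb0 : b 0 = 1) {c : A}
    (hc : b 1 * b 1 = c • 1) (Φ : R →ₗ[A] Module.Dual A R)
    (h0 : Φ (b 0) = b.dualBasis 1) (h1 : Φ (b 1) = b.dualBasis 0) (p q : R) :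
    Φ (p * q) = Φ q ∘ₗ LinearMap.mulLeft A p := by
  suffices (LinearMap.mul A R).compr₂ Φ =
      ((LinearMap.llcomp A R R A ∘ₗ Φ).compl₂ (LinearMap.mul A R)).flip from
    LinearMap.congr_fun₂ this p q
  refine LinearMap.ext_basis b b fun i j => LinearMap.ext fun x => ?_
  obtain ⟨h10, h11⟩ := repr_basis_one_mul b hb0 hc x
  rw [hb0] at h0
  fin_cases i
  · simp [hb0]
  fin_cases j
  · simp [hb0, h0, h1, h11]
  · simp [hc, h0, h1, h10]

end QuadraticBasis

theorem dualTensorHom_comp_rTensor_bijective {A R : Type*} [CommSemiring A] [AddCommMonoid R]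
    [Module A R] [Module.Finite A R] [Module.Projective A R] (Φ : R →ₗ[A] Module.Dual A R)
    (hΦ : Function.Bijective Φ) (M : Type*) [AddCommMonoid M] [Module A M] :
    Function.Bijective (dualTensorHom A R M ∘ₗ Φ.rTensor M) :=
  dualTensorHom_bijective.comp ((LinearEquiv.ofBijective Φ hΦ).rTensor M).bijective

instance (k : Type*) {V : Type*} [CommRing k] [AddCommGroup V] [Module k V] (s : V → V) :
    IsScalarTower ↥(InvPolyFun k s) ↥(PolyFun k V) ↥(PolyFun k V) :=
  ⟨fun g p q => mul_assoc (Subalgebra.inclusion (invPolyFun_le k s) g) p q⟩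

theorem exists_mul_self_eq_smul_one_of_anti_invariant {k V : Type*} [CommRing k]
    [AddCommGroup V] [Module k V] {s : V → V} {β : Module.Dual k V}
    (hsβ : ∀ v, β (s v) = -β v) (hβ : (⇑β : V → k) ∈ PolyFun k V) :
    ∃ c : InvPolyFun k s, (⟨β, hβ⟩ * ⟨β, hβ⟩ : PolyFun k V) = c • 1 :=
  ⟨⟨β * β, mul_mem hβ hβ, fun v => by simp [hsβ v]⟩, (mul_one _).symm⟩

open TensorProduct in
theorem polyFun_dual_iso_and_hom_tensor_equiv_general
    {k V : Type*} [Field k] [AddCommGroup V] [Module k V]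
    (s : V ≃ₗ[k] V) (β : Module.Dual k V) (hsβ : ∀ v, β (s v) = - β v)
    (b : Module.Basis (Fin 2) ↥(InvPolyFun k ⇑s) ↥(PolyFun k V))
    (hb0 : b 0 = 1)
    (hb1 : b 1 = (⟨⇑β, Algebra.subset_adjoin ⟨β, rfl⟩⟩ : ↥(PolyFun k V))) :
    ∀ Φ : ↥(PolyFun k V) →ₗ[↥(InvPolyFun k ⇑s)]
        Module.Dual ↥(InvPolyFun k ⇑s) ↥(PolyFun k V),
      Φ (b 0) = b.dualBasis 1 → Φ (b 1) = b.dualBasis 0 →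
      Function.Bijective Φ ∧
      (∀ p q x : ↥(PolyFun k V), Φ (p * q) x = Φ q (p * x)) ∧
      (∀ (M : Type) [AddCommGroup M] [Module ↥(InvPolyFun k ⇑s) M],
        Function.Bijective
          ((dualTensorHom ↥(InvPolyFun k ⇑s) ↥(PolyFun k V) M) ∘ₗ
            (LinearMap.rTensor M Φ))) := by
  intro Φ h0 h1
  obtain ⟨c, hc⟩ := exists_mul_self_eq_smul_one_of_anti_invariant hsβ
    (Algebra.subset_adjoin ⟨β, rfl⟩)
  rw [← hb1] at hc
  have hΦ : Function.Bijective Φ :=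
    Φ.bijective_of_map_basis b (b.dualBasis.reindex (Equiv.swap 0 1)) fun i => by
      fin_cases i <;> simp [h0, h1]
  have := Module.Finite.of_basis b
  have := Module.Projective.of_basis b
  exact ⟨hΦ, fun p q x => LinearMap.congr_fun (map_mul_eq_comp_mulLeft b hb0 hc Φ h0 h1 p q) x,
    fun M _ _ => dualTensorHom_comp_rTensor_bijective Φ hΦ M⟩

open TensorProduct in
/-- With `R` the polynomial functions on `V`, `s` a reflection
with associated linear form `β` (so `R` is free over `R^s` with basis
`{1, β}`), the `R^s`-linear map `Φ : R → Hom_{R^s}(R, R^s)` sending `1 ↦ β*`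
and `β ↦ 1*` (dual basis) is an isomorphism, and it intertwines
multiplication: `Φ(p·q)(x) = Φ(q)(p·x)` (i.e. it is `R`-linear, `R` acting on
`Hom_{R^s}(R, R^s)` by `(r·f)(x) = f(rx)`); consequently for every
`R^s`-module `M` the canonical map `R ⊗_{R^s} M → Hom_{R^s}(R, M)` obtained
from `Φ` and `dualTensorHom` is bijective, i.e. the functors
`M ↦ R[2] ⊗_{R^s} M` and `M ↦ Hom_{R^s}(R, M)` are naturally isomorphic. -/
theorem polyFun_dual_iso_and_hom_tensor_equiv
    {k V : Type*} [Field k] [Infinite k] (hchar : (2 : k) ≠ 0)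
    [AddCommGroup V] [Module k V] [FiniteDimensional k V]
    (s : V ≃ₗ[k] V) (hs : ∀ v, s (s v) = v)
    (β : Module.Dual k V) (hβ : β ≠ 0)
    (hker : ∀ v, β v = 0 ↔ s v = v)
    (hsβ : ∀ v, β (s v) = - β v)
    (b : Module.Basis (Fin 2) ↥(InvPolyFun k ⇑s) ↥(PolyFun k V))
    (hb0 : b 0 = 1)
    (hb1 : b 1 = (⟨⇑β, Algebra.subset_adjoin ⟨β, rfl⟩⟩ : ↥(PolyFun k V))) :
    ∀ Φ : ↥(PolyFun k V) →ₗ[↥(InvPolyFun k ⇑s)]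
        Module.Dual ↥(InvPolyFun k ⇑s) ↥(PolyFun k V),
      Φ (b 0) = b.dualBasis 1 → Φ (b 1) = b.dualBasis 0 →
      Function.Bijective Φ ∧
      (∀ p q x : ↥(PolyFun k V), Φ (p * q) x = Φ q (p * x)) ∧
      (∀ (M : Type) [AddCommGroup M] [Module ↥(InvPolyFun k ⇑s) M],
        Function.Bijective
          ((dualTensorHom ↥(InvPolyFun k ⇑s) ↥(PolyFun k V) M) ∘ₗ
            (LinearMap.rTensor M Φ))) :=
  polyFun_dual_iso_and_hom_tensor_equiv_general s β hsβ b hb0 hb1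
end
end

section
/- Let V be a faithful representation of a Coxeter group (W,S) over a field of characteristic ≠ 2 in which every element of the set T of reflections (conjugates of elements of S) acts with fixed space of codimension exactly 1. Then distinct reflections of W have distinct fixed hyperplanes and distinct (−1)-eigenlines: for t, r ∈ T, V^t = V^r ⟺ V^{-t} = V^{-r} ⟺ t = r, where V^{-t} denotes the (−1)-eigenspace of t. -/
section Helpers

variable {k V : Type*} [Field k] [AddCommGroup V] [Module k V]

private lemma mem_ker_sub' {f : V →ₗ[k] V} {v : V} :
    v ∈ LinearMap.ker (f - LinearMap.id) ↔ f v = v := by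
  simp [LinearMap.mem_ker, sub_eq_zero]

private lemma mem_ker_add' {f : V →ₗ[k] V} {v : V} :
    v ∈ LinearMap.ker (f + LinearMap.id) ↔ f v = -v := by
  rw [LinearMap.mem_ker]
  simp [add_eq_zero_iff_eq_neg]

private lemma invol_inf (hchar : (2 : k) ≠ 0) (f : V →ₗ[k] V) :
    LinearMap.ker (f - LinearMap.id) ⊓ LinearMap.ker (f + LinearMap.id) = ⊥ := by
  rw [Submodule.eq_bot_iff]
  rintro v ⟨h1, h2⟩
  rw [SetLike.mem_coe, mem_ker_sub'] at h1
  rw [SetLike.mem_coe, mem_ker_add'] at h2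
  have h3 : (2 : k) • v = 0 := by
    rw [two_smul]
    rw [h1] at h2
    nth_rewrite 1 [h2]
    exact neg_add_cancel v
  rcases smul_eq_zero.mp h3 with h | h
  · exact absurd h hchar
  · exact h

private lemma invol_sup (hchar : (2 : k) ≠ 0) (f : V →ₗ[k] V)
    (hf : ∀ v, f (f v) = v) :
    LinearMap.ker (f - LinearMap.id) ⊔ LinearMap.ker (f + LinearMap.id) = ⊤ := by
  rw [eq_top_iff]
  intro v _
  have hv : v = (2 : k)⁻¹ • (v + f v) + (2 : k)⁻¹ • (v - f v) := by
    rw [← smul_add]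
    have h : v + f v + (v - f v) = (2 : k) • v := by rw [two_smul]; abel
    rw [h, smul_smul, inv_mul_cancel₀ hchar, one_smul]
  rw [hv]
  apply Submodule.add_mem_sup
  · rw [mem_ker_sub']
    simp only [map_smul, map_add, hf]
    rw [add_comm]
  · rw [mem_ker_add']
    simp only [map_smul, map_sub, hf, ← smul_neg]
    congr 1
    abel

/-- If two commuting involutions have the same `(-1)`-eigenspace, then the `(+1)`-eigenspace
of the first is contained in that of the second. -/
private lemma transfer (hchar : (2 : k) ≠ 0) {f g : V →ₗ[k] V}
    (hg2 : ∀ v, g (g v) = v)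
    (hcomm : ∀ v, f (g v) = g (f v))
    (hker : LinearMap.ker (f + LinearMap.id) = LinearMap.ker (g + LinearMap.id)) :
    LinearMap.ker (f - LinearMap.id) ≤ LinearMap.ker (g - LinearMap.id) := by
  intro v hv
  rw [mem_ker_sub'] at hv
  have hvmem : v ∈ LinearMap.ker (g - LinearMap.id) ⊔ LinearMap.ker (g + LinearMap.id) := by
    rw [invol_sup hchar g hg2]; trivial
  obtain ⟨a, ha, b, hb, rfl⟩ := Submodule.mem_sup.mp hvmem
  have hga : g a = a := mem_ker_sub'.mp ha
  have hgb : g b = -b := mem_ker_add'.mp hb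
  have hfb : f b = -b := mem_ker_add'.mp (hker ▸ hb)
  -- f a - a = b + b, with LHS in ker (g - 1) and RHS in ker (g + 1)
  have hsplit : f a - a = b + b := by
    have : f a + f b = a + b := by rw [← map_add]; exact hv
    rw [hfb] at this
    have : f a = a + b + b := by rw [← this]; abel
    rw [this]; abel
  have hmem : f a - a ∈ LinearMap.ker (g - LinearMap.id) ⊓ LinearMap.ker (g + LinearMap.id) := by
    refine Submodule.mem_inf.mpr ⟨?_, ?_⟩
    · rw [mem_ker_sub', map_sub, hga]
      have : g (f a) = f (g a) := (hcomm a).symm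
      rw [this, hga]
    · rw [hsplit, mem_ker_add', map_add, hgb]
      abel
  rw [invol_inf hchar] at hmem
  have hb0 : b = 0 := by
    have h2b : (2 : k) • b = 0 := by
      rw [two_smul, ← hsplit, hmem]
    rcases smul_eq_zero.mp h2b with h | h
    · exact absurd h hchar
    · exact h
  rw [hb0, add_zero]
  exact ha

end Helpers

/-- Let `V` be a faithful representation of a Coxeter group
`(W,S)` over a field of characteristic `≠ 2` such that exactly the reflections
(the conjugates of simple reflections) have fixed space of codimension `1`
(a "reflection-faithful" representation).  Then for reflections `t, r` the
fixed hyperplanes agree iff `t = r`, and the `(-1)`-eigenspaces agree iff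
`t = r`. -/
theorem reflection_faithful_hyperplanes_and_eigenlines
    {k : Type*} [Field k] (hchar : (2 : k) ≠ 0)
    {V : Type*} [AddCommGroup V] [Module k V] [FiniteDimensional k V]
    {B : Type*} {W : Type*} [Group W] {M : CoxeterMatrix B} (cs : CoxeterSystem M W)
    (ρ : W →* (V ≃ₗ[k] V))
    (hfaithful : Function.Injective ρ)
    (hrefl : ∀ x : W,
      Module.finrank k
          (V ⧸ LinearMap.ker ((ρ x).toLinearMap - LinearMap.id)) = 1 ↔
        cs.IsReflection x) :
    ∀ t r : W, cs.IsReflection t → cs.IsReflection r →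
      ((LinearMap.ker ((ρ t).toLinearMap - LinearMap.id) =
          LinearMap.ker ((ρ r).toLinearMap - LinearMap.id) ↔ t = r) ∧
       (LinearMap.ker ((ρ t).toLinearMap + LinearMap.id) =
          LinearMap.ker ((ρ r).toLinearMap + LinearMap.id) ↔ t = r)) := by
  classical
  set n := Module.finrank k V with hn
  have hinvol : ∀ x : W, cs.IsReflection x →
      ∀ v : V, (ρ x).toLinearMap ((ρ x).toLinearMap v) = v := by
    intro x hx v
    have h : ρ x (ρ x v) = ρ (x * x) v := by rw [map_mul]; rfl
    rw [LinearEquiv.coe_coe, h, hx.mul_self, map_one]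
    rfl
  -- the fixed space of a reflection has dimension n - 1, and n ≥ 1
  have hfixdim : ∀ x : W, cs.IsReflection x →
      Module.finrank k (LinearMap.ker ((ρ x).toLinearMap - LinearMap.id)) + 1 = n := by
    intro x hx
    have hq := (hrefl x).mpr hx
    have h1 := Submodule.finrank_quotient_add_finrank
      (LinearMap.ker ((ρ x).toLinearMap - LinearMap.id))
    omega
  -- the (-1)-eigenspace of a reflection has dimension 1
  have hline : ∀ x : W, cs.IsReflection x →
      Module.finrank k (LinearMap.ker ((ρ x).toLinearMap + LinearMap.id)) = 1 := by
    intro x hx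
    have hq := (hrefl x).mpr hx
    have h1 := Submodule.finrank_quotient_add_finrank
      (LinearMap.ker ((ρ x).toLinearMap - LinearMap.id))
    have h2 := Submodule.finrank_sup_add_finrank_inf_eq
      (LinearMap.ker ((ρ x).toLinearMap - LinearMap.id))
      (LinearMap.ker ((ρ x).toLinearMap + LinearMap.id))
    rw [invol_sup hchar _ (hinvol x hx), invol_inf hchar, finrank_top,
      finrank_bot k V] at h2
    omega
  -- commuting reflections with the same fixed space are equal
  have key_eq : ∀ x y : W, cs.IsReflection x → cs.IsReflection y →
      ((ρ x).toLinearMap ∘ₗ (ρ y).toLinearMap = (ρ y).toLinearMap ∘ₗ (ρ x).toLinearMap) →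
      LinearMap.ker ((ρ x).toLinearMap - LinearMap.id) =
        LinearMap.ker ((ρ y).toLinearMap - LinearMap.id) → x = y := by
    intro x y hx hy hcomm hker
    set f := (ρ x).toLinearMap with hfdef
    set g := (ρ y).toLinearMap with hgdef
    have hcomm' : ∀ v, f (g v) = g (f v) := fun v => LinearMap.congr_fun hcomm v
    have hl := hline x hx
    obtain ⟨⟨w, hwmem⟩, hwne, hwspan⟩ := finrank_eq_one_iff'.mp hl
    have hw0 : w ≠ 0 := fun h => hwne (by ext; exact h)
    have hfw : f w = -w := mem_ker_add'.mp hwmem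
    have hgw_mem : g w ∈ LinearMap.ker (f + LinearMap.id) := by
      rw [mem_ker_add', hcomm', hfw, map_neg]
    obtain ⟨c, hc⟩ := hwspan ⟨g w, hgw_mem⟩
    have hc' : c • w = g w := congrArg Subtype.val hc
    have hc2 : (c * c) • w = w := by
      have hgg := hinvol y hy w
      rw [← hgdef] at hgg
      calc (c * c) • w = c • (c • w) := by rw [mul_smul]
        _ = c • g w := by rw [hc']
        _ = g (c • w) := by rw [map_smul]
        _ = g (g w) := by rw [hc']
        _ = w := hgg
    have hcpm : c = 1 ∨ c = -1 := by
      have h0 : (c * c - 1) • w = 0 := by rw [sub_smul, hc2, one_smul, sub_self]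
      rcases smul_eq_zero.mp h0 with h | h
      · have hfac : (c - 1) * (c + 1) = 0 := by ring_nf; linear_combination h
        rcases mul_eq_zero.mp hfac with h' | h'
        · left; exact sub_eq_zero.mp h'
        · right; exact eq_neg_of_add_eq_zero_left h'
      · exact absurd h hw0
    have hgw : g w = -w := by
      rcases hcpm with h | h
      · exfalso
        rw [h, one_smul] at hc'
        have hwfix : w ∈ LinearMap.ker (f - LinearMap.id) := by
          rw [hker, mem_ker_sub']; exact hc'.symm
        have hwint : w ∈ LinearMap.ker (f - LinearMap.id) ⊓ LinearMap.ker (f + LinearMap.id) :=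
          ⟨hwfix, hwmem⟩
        rw [invol_inf hchar] at hwint
        exact hw0 hwint
      · rw [h, neg_one_smul] at hc'; exact hc'.symm
    have hfg : f = g := by
      apply LinearMap.ext
      intro v
      have hv : v ∈ LinearMap.ker (f - LinearMap.id) ⊔ LinearMap.ker (f + LinearMap.id) := by
        rw [invol_sup hchar f (hinvol x hx)]; trivial
      obtain ⟨a, ha, b, hb, rfl⟩ := Submodule.mem_sup.mp hv
      obtain ⟨d, hd⟩ := hwspan ⟨b, hb⟩
      have hd' : d • w = b := congrArg Subtype.val hd
      have hga : g a = a := by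
        have h := ha; rw [hker, mem_ker_sub'] at h; exact h
      have hfa : f a = a := mem_ker_sub'.mp ha
      have hfb : f b = -b := by rw [← hd', map_smul, hfw, smul_neg]
      have hgb : g b = -b := by rw [← hd', map_smul, hgw, smul_neg]
      simp only [map_add, hfa, hga, hfb, hgb]
    exact hfaithful (LinearEquiv.toLinearMap_injective hfg)
  intro t r ht hr
  set f := (ρ t).toLinearMap with hfdef
  set g := (ρ r).toLinearMap with hgdef
  have hcomp : (ρ (t * r)).toLinearMap = f ∘ₗ g := by
    rw [map_mul]; rfl
  -- if the fixed space of t*r has codimension ≤ 1 and t ≠ r, then t and r commute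
  have step : t ≠ r →
      n - 1 ≤ Module.finrank k (LinearMap.ker ((ρ (t * r)).toLinearMap - LinearMap.id)) →
      f ∘ₗ g = g ∘ₗ f := by
    intro htr hdim
    have hri : r⁻¹ = r := inv_eq_of_mul_eq_one_right hr.mul_self
    have hti : t⁻¹ = t := inv_eq_of_mul_eq_one_right ht.mul_self
    have hx1 : t * r ≠ 1 := by
      intro h
      apply htr
      have h2 : t = r⁻¹ := eq_inv_of_mul_eq_one_left h
      rw [h2, hri]
    have hq := Submodule.finrank_quotient_add_finrank
      (LinearMap.ker ((ρ (t * r)).toLinearMap - LinearMap.id))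
    have hqne : Module.finrank k
        (V ⧸ LinearMap.ker ((ρ (t * r)).toLinearMap - LinearMap.id)) ≠ 0 := by
      intro h0
      have heq : Module.finrank k
          (LinearMap.ker ((ρ (t * r)).toLinearMap - LinearMap.id)) = n := by omega
      have htop := Submodule.eq_top_of_finrank_eq heq
      have hid : (ρ (t * r)).toLinearMap = LinearMap.id := by
        apply LinearMap.ext
        intro v
        have hv : v ∈ LinearMap.ker ((ρ (t * r)).toLinearMap - LinearMap.id) := by
          rw [htop]; trivial
        exact mem_ker_sub'.mp hv
      apply hx1
      apply hfaithful
      rw [map_one]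
      exact LinearEquiv.toLinearMap_injective hid
    have hnle : n ≥ 1 := by
      have := hfixdim t ht
      omega
    have hfix_le : Module.finrank k
        (LinearMap.ker ((ρ (t * r)).toLinearMap - LinearMap.id)) ≤ n :=
      (LinearMap.ker _).finrank_le
    have hq1 : Module.finrank k
        (V ⧸ LinearMap.ker ((ρ (t * r)).toLinearMap - LinearMap.id)) = 1 := by omega
    have hxr : cs.IsReflection (t * r) := (hrefl _).mp hq1
    have hsq : (t * r) * (t * r) = 1 := hxr.mul_self
    have hcm : t * r = r * t := by
      have h1 : t * r = (t * r)⁻¹ := eq_inv_of_mul_eq_one_left hsq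
      rw [h1, mul_inv_rev, hti, hri]
    calc f ∘ₗ g = (ρ (t * r)).toLinearMap := hcomp.symm
      _ = (ρ (r * t)).toLinearMap := by rw [hcm]
      _ = g ∘ₗ f := by rw [map_mul]; rfl
  constructor
  · constructor
    · intro hker
      by_cases htr : t = r
      · exact htr
      · -- fixed space of t*r contains the common fixed hyperplane
        have hsub : LinearMap.ker (f - LinearMap.id) ≤
            LinearMap.ker ((ρ (t * r)).toLinearMap - LinearMap.id) := by
          intro v hv
          have hfv : f v = v := mem_ker_sub'.mp hv
          have hgv : g v = v := mem_ker_sub'.mp (hker ▸ hv)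
          rw [mem_ker_sub', hcomp]
          show f (g v) = v
          rw [hgv, hfv]
        have hmono := Submodule.finrank_mono hsub
        have hft := hfixdim t ht
        rw [← hfdef] at hft
        have hcomm := step htr (by omega)
        exact key_eq t r ht hr hcomm hker
    · rintro rfl; rfl
  · constructor
    · intro hker
      by_cases htr : t = r
      · exact htr
      · -- fixed space of t*r contains (ker(f-1) ⊓ ker(g-1)) ⊔ ker(f+1)
        set p := LinearMap.ker (f - LinearMap.id) with hp
        set q := LinearMap.ker (g - LinearMap.id) with hq'
        set l := LinearMap.ker (f + LinearMap.id) with hl'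
        have hsub : (p ⊓ q) ⊔ l ≤
            LinearMap.ker ((ρ (t * r)).toLinearMap - LinearMap.id) := by
          intro v hv
          obtain ⟨a, ha, b, hb, rfl⟩ := Submodule.mem_sup.mp hv
          have hfa : f a = a := mem_ker_sub'.mp ha.1
          have hga : g a = a := mem_ker_sub'.mp ha.2
          have hfb : f b = -b := mem_ker_add'.mp hb
          have hgb : g b = -b := mem_ker_add'.mp (hker ▸ hb)
          rw [mem_ker_sub', hcomp]
          show f (g (a + b)) = a + b
          rw [map_add, hga, hgb, map_add, hfa, map_neg, hfb, neg_neg]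
        -- dimension count
        have hft := hfixdim t ht
        have hfr := hfixdim r hr
        have hlt := hline t ht
        rw [← hfdef] at hft hlt
        rw [← hgdef] at hfr
        rw [← hp] at hft
        rw [← hq'] at hfr
        rw [← hl'] at hlt
        have hsup1 := Submodule.finrank_sup_add_finrank_inf_eq p q
        have hsup2 := Submodule.finrank_sup_add_finrank_inf_eq (p ⊓ q) l
        have hpqtop : Module.finrank k ↥(p ⊔ q) ≤ n := (p ⊔ q).finrank_le
        have hinterbot : (p ⊓ q) ⊓ l = ⊥ := by
          rw [Submodule.eq_bot_iff]
          intro v hv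
          have hv' : v ∈ p ⊓ l := ⟨hv.1.1, hv.2⟩
          rw [hp, hl', invol_inf hchar] at hv'
          exact hv'
        rw [hinterbot, finrank_bot k V] at hsup2
        have hmono := Submodule.finrank_mono hsub
        have hcomm := step htr (by omega)
        -- transfer: equal (-1)-eigenspaces ⇒ equal fixed spaces
        have hcomm' : ∀ v, f (g v) = g (f v) := fun v => LinearMap.congr_fun hcomm v
        have hcomm'' : ∀ v, g (f v) = f (g v) := fun v => (hcomm' v).symm
        have hfixeq : p = q := by
          apply le_antisymm
          · exact transfer hchar (hinvol r hr) hcomm' hker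
          · exact transfer hchar (hinvol t ht) hcomm'' hker.symm
        exact key_eq t r ht hr hcomm hfixeq
    · rintro rfl; rfl
end
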